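/- arXiv:1106.0930 — 3 statements merged into one kernel-verified Lean document; each statement's English description precedes it below -/
import Mathlib

section
/- Every class in E_{10}/2E_{10} on which the mod 2 quadratic form takes the value 1 is represented by a root: for every x ∈ E_{10} with ⟨x,x⟩ ≡ 2 (mod 4), there exists α ∈ E_{10} with ⟨α,α⟩ = −2 such that α − x ∈ 2E_{10}. -/
/-- The standard bilinear form on `ℤ^{1,n}`: `⟨x,y⟩ = x₀y₀ - ∑_{i=1}^n xᵢyᵢ`. -/
def B {n : ℕ} (x y : Fin (n + 1) → ℤ) : ℤ :=
  x 0 * y 0 - ∑ i : Fin n, x i.succ * y i.succ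

/-- The vector `k_n = -3e₀ + (e₁ + ⋯ + e_n)`. -/
def kv (n : ℕ) : Fin (n + 1) → ℤ := fun j => if j = 0 then -3 else 1

/-- The lattice `E_n = k_n^⊥` as a submodule of `ℤ^{1,n}`. -/
def En (n : ℕ) : Submodule ℤ (Fin (n + 1) → ℤ) where
  carrier := {x | B x (kv n) = 0}
  zero_mem' := by simp [B]
  add_mem' := by
    intro a b ha hb
    simp only [Set.mem_setOf_eq, B, Pi.add_apply, add_mul] at ha hb ⊢
    rw [Finset.sum_add_distrib]
    linarith
  smul_mem' := by
    intro c x hx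
    simp only [Set.mem_setOf_eq, B, Pi.smul_apply, smul_eq_mul, mul_assoc] at hx ⊢
    rw [← Finset.mul_sum, ← mul_sub, hx, mul_zero]

/-! Modulo 2, a vector `x` is determined by the parity of `x₀` and the set `S` of its odd spatial
coordinates. Since `z² ≡ [z odd] (mod 4)`, the hypothesis `⟨x,x⟩ ≡ 2 (mod 4)` forces
`(x₀ mod 2, #S)` to be one of `(0,2), (0,6), (0,10), (1,3), (1,7)`, and in each case some
`c e₀ + 2a eⱼ - ∑_{i ∈ S} eᵢ` is a root with the same parities (e.g. `e_s - e_t`, `2e₀ - ∑_S eᵢ`,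
`4e₀ - 2e_s - ∑ eᵢ`, `e₀ - ∑_S eᵢ`, `3e₀ - 2e_t - ∑_S eᵢ`). Finally `E₁₀` is saturated in `ℤ¹¹`, so
a difference of vectors of `E₁₀` that is divisible by 2 is twice a vector of `E₁₀`. -/

open Finset

lemma mem_En_iff {n : ℕ} (x : Fin (n + 1) → ℤ) :
    x ∈ En n ↔ ∑ i : Fin n, x i.succ = -3 * x 0 := by
  change B x (kv n) = 0 ↔ _
  simp only [B, kv, Fin.succ_ne_zero, if_true, if_false, mul_one]
  constructor <;> intro h <;> linarith

lemma B_smul_left {n : ℕ} (c : ℤ) (x y : Fin (n + 1) → ℤ) : B (c • x) y = c * B x y := by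
  simp only [B, Pi.smul_apply, smul_eq_mul, mul_sub, mul_sum, mul_assoc]

lemma exists_two_smul_eq_sub {n : ℕ} {α x : Fin (n + 1) → ℤ} (hα : α ∈ En n) (hx : x ∈ En n)
    (hpar : ∀ j, 2 ∣ α j - x j) : ∃ y ∈ En n, α - x = (2 : ℤ) • y := by
  choose y hy using hpar
  have hxy : α - x = (2 : ℤ) • y := funext hy
  refine ⟨y, ?_, hxy⟩
  have h2y : B ((2 : ℤ) • y) (kv n) = 0 := hxy ▸ sub_mem hα hx
  rw [B_smul_left] at h2y
  exact (mul_eq_zero.mp h2y).resolve_left two_ne_zero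

lemma B_cons_self {n : ℕ} (c : ℤ) (f : Fin n → ℤ) :
    B (Fin.cons c f : Fin (n + 1) → ℤ) (Fin.cons c f) = c * c - ∑ i, f i * f i := by
  simp [B]

lemma mul_self_modEq_four (z : ℤ) : z * z ≡ if Odd z then 1 else 0 [ZMOD 4] := by
  rcases Int.even_or_odd' z with ⟨k, rfl | rfl⟩
  · rw [if_neg (by simp [parity_simps]), Int.modEq_zero_iff_dvd]
    exact ⟨k * k, by ring⟩
  · rw [if_pos (by simp [parity_simps]), Int.modEq_iff_dvd]
    exact ⟨-(k * k + k), by ring⟩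

def oddSupport {n : ℕ} (f : Fin n → ℤ) : Finset (Fin n) := univ.filter fun i => Odd (f i)

lemma sum_mul_self_modEq_card_oddSupport {n : ℕ} (f : Fin n → ℤ) :
    ∑ i, f i * f i ≡ #(oddSupport f) [ZMOD 4] := by
  rw [oddSupport, card_filter, Nat.cast_sum]
  exact Int.ModEq.sum fun i _ => by simpa using mul_self_modEq_four (f i)

lemma B_self_modEq {n : ℕ} (x : Fin (n + 1) → ℤ) :
    B x x ≡ (if Odd (x 0) then 1 else 0) - #(oddSupport fun i : Fin n => x i.succ) [ZMOD 4] :=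
  (mul_self_modEq_four _).sub (sum_mul_self_modEq_card_oddSupport _)

/-- The vector `c e₀ + 2a e_{j+1} - ∑_{i ∈ S} e_{i+1}`. -/
def rootCandidate {n : ℕ} (c : ℤ) (S : Finset (Fin n)) (a : ℤ) (j : Fin n) : Fin (n + 1) → ℤ :=
  Fin.cons c fun i => (if i = j then 2 * a else 0) - if i ∈ S then 1 else 0

lemma sum_rootCandidate {n : ℕ} (c : ℤ) (S : Finset (Fin n)) (a : ℤ) (j : Fin n) :
    ∑ i : Fin n, rootCandidate c S a j i.succ = 2 * a - #S := by
  simp [rootCandidate, sum_sub_distrib]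

lemma B_rootCandidate_self {n : ℕ} (c : ℤ) (S : Finset (Fin n)) (a : ℤ) (j : Fin n) :
    B (rootCandidate c S a j) (rootCandidate c S a j)
      = c * c - (#S + 4 * a * a - if j ∈ S then 4 * a else 0) := by
  have hsq : ∀ i, ((if i = j then 2 * a else 0) - if i ∈ S then (1 : ℤ) else 0) ^ 2
      = (if i = j then 4 * a * a - (if j ∈ S then 4 * a else 0) else 0) + if i ∈ S then 1 else 0 := by
    intro i
    by_cases hij : i = j
    · subst hij; split_ifs <;> ring
    · split_ifs <;> ring
  rw [rootCandidate, B_cons_self]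
  simp only [← sq, hsq, sum_add_distrib, sum_ite_eq', mem_univ, if_true, sum_boole,
    filter_mem_eq_of_subset (subset_univ S)]
  ring

lemma rootCandidate_sub_dvd {n : ℕ} (x : Fin (n + 1) → ℤ) (c a : ℤ) (j : Fin n)
    (hc : 2 ∣ c - x 0) (k : Fin (n + 1)) :
    2 ∣ rootCandidate c (oddSupport fun i : Fin n => x i.succ) a j k - x k := by
  induction k using Fin.cases with
  | zero => exact hc
  | succ i =>
    simp only [rootCandidate, Fin.cons_succ, oddSupport, mem_filter, mem_univ, true_and]
    rcases Int.even_or_odd (x i.succ) with hx | hx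
    · rw [if_neg (Int.not_odd_iff_even.mpr hx)]
      obtain ⟨b, hb⟩ := hx
      split_ifs <;> omega
    · rw [if_pos hx]
      obtain ⟨b, hb⟩ := hx
      split_ifs <;> omega

lemma exists_root_parameters (S : Finset (Fin 10)) (x₀ : ℤ)
    (h : (if Odd x₀ then 1 else 0) - #S ≡ 2 [ZMOD 4]) :
    ∃ c a : ℤ, ∃ j, 2 ∣ c - x₀ ∧ 2 * a - #S = -3 * c ∧
      c * c - (#S + 4 * a * a - if j ∈ S then 4 * a else 0) = -2 := by
  have hS : #S ≤ 10 := by simpa using card_le_univ S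
  rcases Int.even_or_odd x₀ with hx₀ | hx₀
  · rw [if_neg (Int.not_odd_iff_even.mpr hx₀)] at h
    obtain ⟨b, hb⟩ := hx₀
    have hcard : #S = 2 ∨ #S = 6 ∨ #S = 10 := by
      unfold Int.ModEq at h; omega
    rcases hcard with hm | hm | hm
    · obtain ⟨j, hj⟩ := card_pos.mp (by omega : 0 < #S)
      exact ⟨0, 1, j, by omega, by simp [hm], by simp [hj, hm]⟩
    · exact ⟨2, 0, 0, by omega, by simp [hm], by simp [hm]⟩
    · have hj : (0 : Fin 10) ∈ S := by
        rw [eq_univ_of_card S (by simpa using hm)]; exact mem_univ _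
      exact ⟨4, -1, 0, by omega, by simp [hm], by simp [hj, hm]⟩
  · rw [if_pos hx₀] at h
    obtain ⟨b, hb⟩ := hx₀
    have hcard : #S = 3 ∨ #S = 7 := by
      unfold Int.ModEq at h; omega
    rcases hcard with hm | hm
    · exact ⟨1, 0, 0, by omega, by simp [hm], by simp [hm]⟩
    · obtain ⟨j, hj⟩ := card_pos.mp (by rw [card_compl]; simp [hm] : 0 < #Sᶜ)
      exact ⟨3, -1, j, by omega, by simp [hm], by simp [mem_compl.mp hj, hm]⟩

/-- every class of `E₁₀/2E₁₀` on which the mod-2 quadratic form equals 1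
is represented by a root. -/
theorem root_represents_odd_class (x : Fin 11 → ℤ) (hx : x ∈ En 10)
    (h4 : B x x ≡ 2 [ZMOD 4]) :
    ∃ α : Fin 11 → ℤ, α ∈ En 10 ∧ B α α = -2 ∧
      ∃ y : Fin 11 → ℤ, y ∈ En 10 ∧ α - x = (2 : ℤ) • y := by
  set S := oddSupport fun i : Fin 10 => x i.succ
  obtain ⟨c, a, j, hc, hsum, hnorm⟩ :=
    exists_root_parameters S (x 0) ((B_self_modEq x).symm.trans h4)
  have hα : rootCandidate c S a j ∈ En 10 := by
    rw [mem_En_iff, sum_rootCandidate, hsum]; rfl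
  exact ⟨rootCandidate c S a j, hα, by rw [B_rootCandidate_self, hnorm],
    exists_two_smul_eq_sub hα hx (rootCandidate_sub_dvd x c a j hc)⟩
end

section
/- For every w ∈ E₉ and every t ∈ ℤ with ⟨w,w⟩ = 2t, the map ι_w : ℤ^{1,9} → ℤ^{1,9} defined by ι_w(v) = v + ⟨v,k₉⟩·w − (⟨w,v⟩ + t·⟨v,k₉⟩)·k₉ is a ℤ-linear bijection of ℤ^{1,9} that preserves the bilinear form (⟨ι_w(x), ι_w(y)⟩ = ⟨x,y⟩ for all x,y) and fixes k₉. Moreover ι is additive: if w, w' ∈ E₉ with ⟨w,w⟩ = 2t and ⟨w',w'⟩ = 2t', then ι_{w+w'} (formed with the integer t + t' + ⟨w,w'⟩, which satisfies ⟨w+w', w+w'⟩ = 2(t + t' + ⟨w,w'⟩)) equals the composition ι_w ∘ ι_{w'}. -/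
/-- The map `ι_w : v ↦ v + ⟨v,k₉⟩·w − (⟨w,v⟩ + t·⟨v,k₉⟩)·k₉` on `ℤ^{1,9}`. -/
def iota (w : Fin 10 → ℤ) (t : ℤ) (v : Fin 10 → ℤ) : Fin 10 → ℤ :=
  v + B v (kv 9) • w - (B w v + t * B v (kv 9)) • kv 9

/-!
`ι_w` is the Eichler transformation `E(k₉, w)` of the isotropic vector `k₉`, and all claims
hold for any symmetric bilinear form `β` over a commutative ring and any isotropic `k`. Since
`β (ι_w v) k = β v k`, composing two such maps adds the `w`'s, so `ι_{-w}` inverts `ι_w`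
(`β(-w, w) = -2t` brings the parameter back to `0`). In the expansion of `β (ι_w x) (ι_w y)`
the term `β(w, w)·β(x, k)·β(y, k)` cancels the two `-t·β(x, k)·β(y, k)` terms.
-/

namespace LinearMap.BilinForm

variable {R M : Type*} [CommRing R] [AddCommGroup M] [Module R M] (β : LinearMap.BilinForm R M)

/-- The Eichler transformation `E(k, w)`, with `t` in the role of `Q(w) = β w w / 2`. -/
def eichler (k w : M) (t : R) : M →ₗ[R] M :=
  LinearMap.id + (β.flip k).smulRight w - (β w + t • β.flip k).smulRight k

variable {β} {k : M}

theorem eichler_apply (w : M) (t : R) (v : M) :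
    β.eichler k w t v = v + β v k • w - (β w v + t * β v k) • k := by
  simp [eichler]

theorem eichler_zero_zero : β.eichler k 0 0 = LinearMap.id := by
  ext v
  simp [eichler_apply]

theorem eichler_self (hk : β k k = 0) {w : M} (hw : β w k = 0) (t : R) :
    β.eichler k w t k = k := by
  simp [eichler_apply, hk, hw]

theorem apply_eichler_isotropic (hk : β k k = 0) {w : M} (hw : β w k = 0) (t : R) (v : M) :
    β (β.eichler k w t v) k = β v k := by
  simp [eichler_apply, hk, hw]

theorem eichler_add (hk : β k k = 0) {w w' : M} (hw : β w k = 0) (hw' : β w' k = 0)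
    (t t' : R) :
    β.eichler k (w + w') (t + t' + β w w') = β.eichler k w t ∘ₗ β.eichler k w' t' := by
  ext v
  have hwv : β w (β.eichler k w' t' v) = β w v + β v k * β w w' := by
    simp [eichler_apply, hw]
  rw [LinearMap.comp_apply, eichler_apply (w := w), apply_eichler_isotropic hk hw', hwv,
    eichler_apply, eichler_apply, map_add, LinearMap.add_apply]
  module

theorem eichler_bijective (hk : β k k = 0) {w : M} (hw : β w k = 0) {t : R}
    (ht : β w w = 2 * t) : Function.Bijective (β.eichler k w t) := by
  have hnw : β (-w) k = 0 := by simp [hw]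
  have hww : t + t + β w (-w) = 0 := by rw [map_neg, ht]; ring
  have hww' : t + t + β (-w) w = 0 := by rw [map_neg, LinearMap.neg_apply, ht]; ring
  have hleft : β.eichler k (-w) t ∘ₗ β.eichler k w t = LinearMap.id := by
    rw [← eichler_add hk hnw hw, neg_add_cancel, hww', eichler_zero_zero]
  have hright : β.eichler k w t ∘ₗ β.eichler k (-w) t = LinearMap.id := by
    rw [← eichler_add hk hw hnw, add_neg_cancel, hww, eichler_zero_zero]
  exact Function.bijective_iff_has_inverse.mpr
    ⟨β.eichler k (-w) t, LinearMap.congr_fun hleft, LinearMap.congr_fun hright⟩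

theorem apply_eichler_eichler (hβ : β.IsSymm) (hk : β k k = 0) {w : M} (hw : β w k = 0)
    {t : R} (ht : β w w = 2 * t) (x y : M) :
    β (β.eichler k w t x) (β.eichler k w t y) = β x y := by
  simp only [eichler_apply, map_add, map_sub, map_smul, LinearMap.add_apply,
    LinearMap.sub_apply, LinearMap.smul_apply, smul_eq_mul, hk, hw, ht, hβ.eq k, hβ.eq w x]
  ring

end LinearMap.BilinForm

open LinearMap.BilinForm

def lorentzForm (n : ℕ) : LinearMap.BilinForm ℤ (Fin (n + 1) → ℤ) :=
  LinearMap.mk₂ ℤ B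
    (fun x y z => by simp only [B, Pi.add_apply, add_mul, Finset.sum_add_distrib]; ring)
    (fun c x y => by
      simp only [B, Pi.smul_apply, smul_eq_mul, mul_assoc, ← Finset.mul_sum]; ring)
    (fun x y z => by simp only [B, Pi.add_apply, mul_add, Finset.sum_add_distrib]; ring)
    (fun c x y => by
      simp only [B, Pi.smul_apply, smul_eq_mul, mul_left_comm _ c, ← Finset.mul_sum]; ring)

theorem lorentzForm_apply {n : ℕ} (x y : Fin (n + 1) → ℤ) : lorentzForm n x y = B x y := rfl

theorem lorentzForm_isSymm (n : ℕ) : (lorentzForm n).IsSymm :=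
  ⟨fun x y => by simp only [lorentzForm_apply, B, mul_comm]⟩

theorem lorentzForm_kv_kv : lorentzForm 9 (kv 9) (kv 9) = 0 := by decide

theorem iota_eq_eichler (w : Fin 10 → ℤ) (t : ℤ) :
    iota w t = (lorentzForm 9).eichler (kv 9) w t := by
  ext v : 1
  rw [eichler_apply]
  rfl

/-- for `w ∈ E₉` with `⟨w,w⟩ = 2t`, the map `ι_w` is a linear bijective
isometry of `ℤ^{1,9}` fixing `k₉`, and `ι` is additive in `w`. -/
theorem iota_isometry_and_additive :
    (∀ w : Fin 10 → ℤ, B w (kv 9) = 0 → ∀ t : ℤ, B w w = 2 * t →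
      Function.Bijective (iota w t) ∧
      (∀ x y : Fin 10 → ℤ, iota w t (x + y) = iota w t x + iota w t y) ∧
      (∀ (c : ℤ) (x : Fin 10 → ℤ), iota w t (c • x) = c • iota w t x) ∧
      (∀ x y : Fin 10 → ℤ, B (iota w t x) (iota w t y) = B x y) ∧
      iota w t (kv 9) = kv 9) ∧
    (∀ w w' : Fin 10 → ℤ, B w (kv 9) = 0 → B w' (kv 9) = 0 →
      ∀ t t' : ℤ, B w w = 2 * t → B w' w' = 2 * t' →
      ∀ v : Fin 10 → ℤ,
        iota (w + w') (t + t' + B w w') v = iota w t (iota w' t' v)) := by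
  simp only [← lorentzForm_apply, iota_eq_eichler]
  refine ⟨fun w hw t ht => ⟨?_, ?_, ?_, ?_, ?_⟩, fun w w' hw hw' t t' _ _ v => ?_⟩
  · exact eichler_bijective lorentzForm_kv_kv hw ht
  · exact map_add _
  · exact map_smul _
  · exact apply_eichler_eichler (lorentzForm_isSymm 9) lorentzForm_kv_kv hw ht
  · exact eichler_self lorentzForm_kv_kv hw t
  · rw [eichler_add lorentzForm_kv_kv hw hw', LinearMap.comp_apply]
end

section
/- Let n ≥ 3 and let r ∈ ℤ^{1,n} satisfy ⟨r, k_n⟩ = 0, ⟨r,r⟩ = −2, and |⟨r, e₀⟩| ≤ 1. Then either r = e_i − e_j for some indices 1 ≤ i, j ≤ n with i ≠ j, or r = ε·(e₀ − e_i − e_j − e_k) for some ε ∈ {1, −1} and pairwise distinct indices 1 ≤ i, j, k ≤ n. -/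
/-!
Write `r = (a, x)` with `a = r₀` and `x` the tail of `r`. The hypotheses say `∑ xᵢ = -3a`,
`∑ xᵢ² = a² + 2` and `|a| ≤ 1`, so `∑ xᵢ² ≤ 3` and every `xᵢ` lies in `{-1, 0, 1}`. Such an `x` is
determined by the sets `P` of its `1`-entries and `N` of its `-1`-entries, which satisfy
`|P| - |N| = -3a` and `|P| + |N| = a² + 2`: for `a = 0` both are singletons, and for `a = ±1` one
of them is empty and the other has three elements.
-/

open Finset

section SignVectors

variable {ι : Type*} [Fintype ι] {x : ι → ℤ}

lemma eq_neg_one_or_zero_or_one_of_sum_sq_lt_four (h : ∑ i, x i ^ 2 < 4) (i : ι) :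
    x i = -1 ∨ x i = 0 ∨ x i = 1 := by
  have hle : x i ^ 2 ≤ ∑ j, x j ^ 2 := single_le_sum (fun j _ => sq_nonneg (x j)) (mem_univ i)
  have : -2 < x i ∧ x i < 2 := by constructor <;> nlinarith
  omega

lemma eq_sum_single_sub_sum_single [DecidableEq ι] (hx : ∀ i, x i = -1 ∨ x i = 0 ∨ x i = 1) :
    x = ∑ i ∈ {i | x i = 1}, Pi.single i 1 - ∑ i ∈ {i | x i = -1}, Pi.single i 1 := by
  ext j
  rcases hx j with h | h | h <;> simp [Finset.sum_apply, Pi.single_apply, h]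

lemma sum_eq_card_sub_card (hx : ∀ i, x i = -1 ∨ x i = 0 ∨ x i = 1) :
    ∑ i, x i = #{i | x i = 1} - #{i | x i = -1} := by
  simp only [card_filter, Nat.cast_sum, Nat.cast_ite, Nat.cast_one, Nat.cast_zero,
    ← sum_sub_distrib]
  refine sum_congr rfl fun i _ => ?_
  rcases hx i with h | h | h <;> simp [h]

lemma sum_sq_eq_card_add_card (hx : ∀ i, x i = -1 ∨ x i = 0 ∨ x i = 1) :
    ∑ i, x i ^ 2 = #{i | x i = 1} + #{i | x i = -1} := by
  simp only [card_filter, Nat.cast_sum, Nat.cast_ite, Nat.cast_one, Nat.cast_zero,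
    ← sum_add_distrib]
  refine sum_congr rfl fun i _ => ?_
  rcases hx i with h | h | h <;> simp [h]

variable [DecidableEq ι]

lemma exists_eq_single_sub_single (hx : ∀ i, x i = -1 ∨ x i = 0 ∨ x i = 1)
    (hsum : ∑ i, x i = 0) (hsq : ∑ i, x i ^ 2 = 2) :
    ∃ i j, i ≠ j ∧ x = Pi.single i 1 - Pi.single j 1 := by
  rw [sum_eq_card_sub_card hx] at hsum
  rw [sum_sq_eq_card_add_card hx] at hsq
  obtain ⟨i, hi⟩ := card_eq_one.mp (show #{i | x i = 1} = 1 by omega)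
  obtain ⟨j, hj⟩ := card_eq_one.mp (show #{i | x i = -1} = 1 by omega)
  have hxi : x i = 1 := by simpa using hi.symm.subset (mem_singleton_self i)
  have hxj : x j = -1 := by simpa using hj.symm.subset (mem_singleton_self j)
  refine ⟨i, j, fun h => by simp [h, hxj] at hxi, ?_⟩
  rw [eq_sum_single_sub_sum_single hx, hi, hj, sum_singleton, sum_singleton]

lemma exists_eq_neg_sum_three_single (hx : ∀ i, x i = -1 ∨ x i = 0 ∨ x i = 1)
    (hsum : ∑ i, x i = -3) (hsq : ∑ i, x i ^ 2 = 3) :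
    ∃ i j k, i ≠ j ∧ i ≠ k ∧ j ≠ k ∧
      x = -(Pi.single i 1 + Pi.single j 1 + Pi.single k 1) := by
  rw [sum_eq_card_sub_card hx] at hsum
  rw [sum_sq_eq_card_add_card hx] at hsq
  have hpos : ({i | x i = 1} : Finset ι) = ∅ := card_eq_zero.mp (by omega)
  obtain ⟨i, j, k, hij, hik, hjk, hneg⟩ := card_eq_three.mp (show #{i | x i = -1} = 3 by omega)
  refine ⟨i, j, k, hij, hik, hjk, ?_⟩
  rw [eq_sum_single_sub_sum_single hx, hpos, hneg, sum_empty, sum_insert (by simp [hij, hik]),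
    sum_insert (by simp [hjk]), sum_singleton, zero_sub, add_assoc]

lemma exists_eq_neg_smul_sum_three_single {ε : ℤ} (hε : ε = 1 ∨ ε = -1)
    (hx : ∀ i, x i = -1 ∨ x i = 0 ∨ x i = 1)
    (hsum : ∑ i, x i = -3 * ε) (hsq : ∑ i, x i ^ 2 = 3) :
    ∃ i j k, i ≠ j ∧ i ≠ k ∧ j ≠ k ∧
      x = -ε • (Pi.single i 1 + Pi.single j 1 + Pi.single k 1) := by
  rcases hε with rfl | rfl
  · obtain ⟨i, j, k, hij, hik, hjk, h⟩ :=
      exists_eq_neg_sum_three_single hx (by simpa using hsum) hsq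
    exact ⟨i, j, k, hij, hik, hjk, by rw [h, neg_smul, one_smul]⟩
  · have hx' : ∀ i, (-x) i = -1 ∨ (-x) i = 0 ∨ (-x) i = 1 := fun i => by
      rcases hx i with h | h | h <;> simp [h]
    obtain ⟨i, j, k, hij, hik, hjk, h⟩ := exists_eq_neg_sum_three_single hx'
      (by simp [sum_neg_distrib, hsum]) (by simpa using hsq)
    exact ⟨i, j, k, hij, hik, hjk, by rw [neg_neg, one_smul]; exact neg_injective h⟩

end SignVectors

section Lorentzian

variable {n : ℕ} (r : Fin (n + 1) → ℤ)

lemma B_kv : B r (kv n) = -3 * r 0 - ∑ i, Fin.tail r i := by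
  simp [B, kv, Fin.tail, mul_comm]

lemma B_self : B r r = r 0 ^ 2 - ∑ i, Fin.tail r i ^ 2 := by
  simp [B, Fin.tail, sq]

lemma B_single_zero : B r (Pi.single 0 1) = r 0 := by
  simp [B]

lemma eq_single_succ_sub_single_succ {i j : Fin n} (h0 : r 0 = 0)
    (htail : Fin.tail r = Pi.single i 1 - Pi.single j 1) :
    r = Pi.single i.succ 1 - Pi.single j.succ 1 := by
  rw [← Fin.cons_self_tail r, h0, htail]
  ext t
  cases t using Fin.cases <;> simp [Pi.single_apply]

lemma eq_smul_single_zero_sub_single_succ {i j k : Fin n}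
    (htail : Fin.tail r = -r 0 • (Pi.single i 1 + Pi.single j 1 + Pi.single k 1)) :
    r = r 0 • (Pi.single 0 1 - Pi.single i.succ 1 - Pi.single j.succ 1
      - Pi.single k.succ 1) := by
  conv_lhs => rw [← Fin.cons_self_tail r, htail]
  ext t
  cases t using Fin.cases with
  | zero => simp
  | succ m =>
    simp only [Fin.cons_succ, Pi.smul_apply, Pi.add_apply, Pi.sub_apply, Pi.single_apply,
      Fin.succ_inj, Fin.succ_ne_zero, if_false, smul_eq_mul]
    split_ifs <;> ring

end Lorentzian

theorem root_classification_general (n : ℕ) (r : Fin (n + 1) → ℤ)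
    (h1 : B r (kv n) = 0) (h2 : B r r = -2)
    (h3 : |B r (Pi.single 0 1)| ≤ 1) :
    (∃ i j : Fin n, i ≠ j ∧ r = Pi.single i.succ 1 - Pi.single j.succ 1) ∨
    (∃ ε : ℤ, (ε = 1 ∨ ε = -1) ∧ ∃ i j k : Fin n, i ≠ j ∧ i ≠ k ∧ j ≠ k ∧
      r = ε • (Pi.single 0 1 - Pi.single i.succ 1 - Pi.single j.succ 1
        - Pi.single k.succ 1)) := by
  have hsum : ∑ i, Fin.tail r i = -3 * r 0 := by rw [B_kv] at h1; linarith
  have hsq : ∑ i, Fin.tail r i ^ 2 = r 0 ^ 2 + 2 := by rw [B_self] at h2; linarith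
  have hr0 : |r 0| ≤ 1 := by rwa [B_single_zero] at h3
  have htail := eq_neg_one_or_zero_or_one_of_sum_sq_lt_four
    (x := Fin.tail r) (by nlinarith [abs_le.mp hr0])
  by_cases h0 : r 0 = 0
  · left
    rw [h0] at hsum hsq
    obtain ⟨i, j, hij, hx⟩ := exists_eq_single_sub_single htail hsum hsq
    exact ⟨i, j, hij, eq_single_succ_sub_single_succ r h0 hx⟩
  · right
    have hε : r 0 = 1 ∨ r 0 = -1 := by rw [abs_le] at hr0; omega
    have hsq' : ∑ i, Fin.tail r i ^ 2 = 3 := by rcases hε with h | h <;> rw [h] at hsq <;> simpa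
    obtain ⟨i, j, k, hij, hik, hjk, hx⟩ :=
      exists_eq_neg_smul_sum_three_single hε htail hsum hsq'
    exact ⟨r 0, hε, i, j, k, hij, hik, hjk, eq_smul_single_zero_sub_single_succ r hx⟩

/-- a root `r ∈ E_n` with `|⟨r,e₀⟩| ≤ 1` is of the form `eᵢ - eⱼ`
or `±(e₀ - eᵢ - eⱼ - e_k)`. -/
theorem root_classification (n : ℕ) (hn : 3 ≤ n) (r : Fin (n + 1) → ℤ)
    (h1 : B r (kv n) = 0) (h2 : B r r = -2)
    (h3 : |B r (Pi.single 0 1)| ≤ 1) :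
    (∃ i j : Fin n, i ≠ j ∧ r = Pi.single i.succ 1 - Pi.single j.succ 1) ∨
    (∃ ε : ℤ, (ε = 1 ∨ ε = -1) ∧ ∃ i j k : Fin n, i ≠ j ∧ i ≠ k ∧ j ≠ k ∧
      r = ε • (Pi.single 0 1 - Pi.single i.succ 1 - Pi.single j.succ 1
        - Pi.single k.succ 1)) :=
  root_classification_general n r h1 h2 h3
end
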